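/- arXiv:2410.06394 — 5 statements merged into one kernel-verified Lean document; each statement's English description precedes it below -/
import Mathlib

section
/- Let M₁, M₂, J be mutually independent real-valued random variables on a probability space, where M₁ and M₂ are identically distributed with mean μ_m ≠ 0 and variance σ_m² > 0, and J has mean μ and variance σ² > 0 (all second moments finite). Then the Pearson correlation coefficient of the random variables M₁·J and M₂·J equals (1 + (σ_m²/μ_m²)·(1 + μ²/σ²))⁻¹. Equivalently, Cov(M₁J, M₂J) = μ_m²·σ² and Var(M₁J) = Var(M₂J) = σ_m²σ² + σ_m²μ² + μ_m²σ², so the correlation is μ_m²σ² / (σ_m²σ² + σ_m²μ² + μ_m²σ²). -/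
/-! Independence makes every moment that occurs factor:
`E[(M₁J)(M₂J)] = E[M₁] E[M₂] E[J²]` and `E[(MᵢJ)²] = E[Mᵢ²] E[J²]`. Writing `E[X²] = Var X + E[X]²`
turns these into the covariance and the variances, and the correlation is their quotient. -/

open MeasureTheory ProbabilityTheory

theorem inv_one_add_div_mul_one_add_div {K : Type*} [Field K] {a b : K} (ha : a ≠ 0) (hb : b ≠ 0)
    (s m : K) : (1 + s / a * (1 + m / b))⁻¹ = a * b / (s * b + s * m + a * b) := by
  field_simp
  ring

namespace ProbabilityTheory

variable {Ω : Type*} {mΩ : MeasurableSpace Ω} {μ : Measure Ω} {X Y Z : Ω → ℝ}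

lemma IndepFun.sq (h : IndepFun X Y μ) : IndepFun (fun ω => X ω ^ 2) (fun ω => Y ω ^ 2) μ :=
  h.comp (measurable_id.pow_const 2) (measurable_id.pow_const 2)

lemma IndepFun.memLp_two_mul (h : IndepFun X Y μ) (hX : MemLp X 2 μ) (hY : MemLp Y 2 μ) :
    MemLp (fun ω => X ω * Y ω) 2 μ := by
  refine (memLp_two_iff_integrable_sq (hX.1.mul hY.1)).2 ?_
  simpa only [Pi.mul_def, mul_pow] using h.sq.integrable_mul hX.integrable_sq hY.integrable_sq

lemma IndepFun.variance_mul [IsProbabilityMeasure μ] (h : IndepFun X Y μ) (hX : MemLp X 2 μ)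
    (hY : MemLp Y 2 μ) :
    variance (fun ω => X ω * Y ω) μ = variance X μ * variance Y μ +
      variance X μ * μ[Y] ^ 2 + μ[X] ^ 2 * variance Y μ := by
  have hsq : ∫ ω, (X ω * Y ω) ^ 2 ∂μ = (∫ ω, X ω ^ 2 ∂μ) * ∫ ω, Y ω ^ 2 ∂μ := by
    simpa only [mul_pow] using h.sq.integral_fun_mul_eq_mul_integral (hX.1.pow 2) (hY.1.pow 2)
  rw [variance_eq_sub (h.memLp_two_mul hX hY), variance_eq_sub hX, variance_eq_sub hY]
  simp only [Pi.pow_apply]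
  rw [hsq, h.integral_fun_mul_eq_mul_integral hX.1 hY.1]
  ring

lemma iIndepFun.covariance_mul_mul_right [IsProbabilityMeasure μ] (h : iIndepFun ![X, Y, Z] μ)
    (hX : MemLp X 2 μ) (hY : MemLp Y 2 μ) (hZ : MemLp Z 2 μ) :
    cov[fun ω => X ω * Z ω, fun ω => Y ω * Z ω; μ] = μ[X] * μ[Y] * variance Z μ := by
  have hXY : IndepFun X Y μ := h.indepFun (show (0 : Fin 3) ≠ 1 by decide)
  have hXZ : IndepFun X Z μ := h.indepFun (show (0 : Fin 3) ≠ 2 by decide)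
  have hYZ : IndepFun Y Z μ := h.indepFun (show (1 : Fin 3) ≠ 2 by decide)
  have hXY_Z : IndepFun (fun ω => X ω * Y ω) (fun ω => Z ω ^ 2) μ :=
    (h.indepFun_mul_left₀ (fun i => by fin_cases i <;> simp [hX.1.aemeasurable,
      hY.1.aemeasurable, hZ.1.aemeasurable]) 0 1 2 (by decide) (by decide)).comp
      measurable_id (measurable_id.pow_const 2)
  have hprod : ∫ ω, (X ω * Z ω) * (Y ω * Z ω) ∂μ = μ[X] * μ[Y] * ∫ ω, Z ω ^ 2 ∂μ := by
    calc ∫ ω, (X ω * Z ω) * (Y ω * Z ω) ∂μ = ∫ ω, (X ω * Y ω) * Z ω ^ 2 ∂μ := by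
          congr 1; ext ω; ring
      _ = μ[X] * μ[Y] * ∫ ω, Z ω ^ 2 ∂μ := by
          rw [hXY_Z.integral_fun_mul_eq_mul_integral (hX.1.mul hY.1) (hZ.1.pow 2),
            hXY.integral_fun_mul_eq_mul_integral hX.1 hY.1]
  rw [covariance_eq_sub (hXZ.memLp_two_mul hX hZ) (hYZ.memLp_two_mul hY hZ), variance_eq_sub hZ]
  simp only [Pi.mul_apply, Pi.pow_apply]
  rw [hprod, hXZ.integral_fun_mul_eq_mul_integral hX.1 hZ.1,
    hYZ.integral_fun_mul_eq_mul_integral hY.1 hZ.1]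
  ring

end ProbabilityTheory

theorem corm_weights_correlation_general {Ω : Type*} [MeasureSpace Ω]
    [IsProbabilityMeasure (ℙ : Measure Ω)]
    (M₁ M₂ J : Ω → ℝ)
    (hindep : iIndepFun ![M₁, M₂, J] ℙ)
    (hid : IdentDistrib M₁ M₂ ℙ ℙ)
    (hM₁ : MemLp M₁ 2 ℙ) (hJ : MemLp J 2 ℙ)
    (μm σm2 μ σ2 : ℝ)
    (hμm : μm = ∫ ω, M₁ ω ∂ℙ) (hμm0 : μm ≠ 0)
    (hσm2 : σm2 = variance M₁ ℙ)
    (hμ : μ = ∫ ω, J ω ∂ℙ)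
    (hσ2 : σ2 = variance J ℙ) (hσ2pos : 0 < σ2) :
    (∫ ω, (M₁ ω * J ω) * (M₂ ω * J ω) ∂ℙ) -
        (∫ ω, M₁ ω * J ω ∂ℙ) * (∫ ω, M₂ ω * J ω ∂ℙ) = μm ^ 2 * σ2 ∧
      variance (fun ω => M₁ ω * J ω) ℙ = σm2 * σ2 + σm2 * μ ^ 2 + μm ^ 2 * σ2 ∧
      variance (fun ω => M₂ ω * J ω) ℙ = σm2 * σ2 + σm2 * μ ^ 2 + μm ^ 2 * σ2 ∧
      ((∫ ω, (M₁ ω * J ω) * (M₂ ω * J ω) ∂ℙ) -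
          (∫ ω, M₁ ω * J ω ∂ℙ) * (∫ ω, M₂ ω * J ω ∂ℙ)) /
          (Real.sqrt (variance (fun ω => M₁ ω * J ω) ℙ) *
            Real.sqrt (variance (fun ω => M₂ ω * J ω) ℙ)) =
        (1 + σm2 / μm ^ 2 * (1 + μ ^ 2 / σ2))⁻¹ ∧
      (1 + σm2 / μm ^ 2 * (1 + μ ^ 2 / σ2))⁻¹ =
        μm ^ 2 * σ2 / (σm2 * σ2 + σm2 * μ ^ 2 + μm ^ 2 * σ2) := by
  have hM₂ : MemLp M₂ 2 ℙ := hid.memLp_snd hM₁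
  have hM₁J : IndepFun M₁ J ℙ := hindep.indepFun (show (0 : Fin 3) ≠ 2 by decide)
  have hM₂J : IndepFun M₂ J ℙ := hindep.indepFun (show (1 : Fin 3) ≠ 2 by decide)
  have hcov : (∫ ω, (M₁ ω * J ω) * (M₂ ω * J ω) ∂ℙ) -
      (∫ ω, M₁ ω * J ω ∂ℙ) * (∫ ω, M₂ ω * J ω ∂ℙ) = μm ^ 2 * σ2 := by
    have h := hindep.covariance_mul_mul_right hM₁ hM₂ hJ
    rw [covariance_eq_sub (hM₁J.memLp_two_mul hM₁ hJ) (hM₂J.memLp_two_mul hM₂ hJ),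
      ← hid.integral_eq] at h
    rw [hμm, hσ2, sq]
    simpa only [Pi.mul_apply] using h
  have hvar₁ : variance (fun ω => M₁ ω * J ω) ℙ = σm2 * σ2 + σm2 * μ ^ 2 + μm ^ 2 * σ2 := by
    rw [hM₁J.variance_mul hM₁ hJ, hμm, hσm2, hμ, hσ2]
  have hvar₂ : variance (fun ω => M₂ ω * J ω) ℙ = σm2 * σ2 + σm2 * μ ^ 2 + μm ^ 2 * σ2 := by
    rw [hM₂J.variance_mul hM₂ hJ, ← hid.integral_eq, ← hid.variance_eq, hμm, hσm2, hμ, hσ2]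
  have halg := inv_one_add_div_mul_one_add_div (pow_ne_zero 2 hμm0) hσ2pos.ne' σm2 (μ ^ 2)
  refine ⟨hcov, hvar₁, hvar₂, ?_, halg⟩
  rw [hcov, hvar₁, hvar₂, Real.mul_self_sqrt (hvar₁ ▸ variance_nonneg _ _), halg]

/-- Correlation between the weights `M₁·J` and `M₂·J` of two components of a Compound Random
Measure, where the i.i.d. scores `M₁, M₂` and the jump `J` are mutually independent:
`Cov(M₁J, M₂J) = μₘ²σ²`, `Var(M₁J) = Var(M₂J) = σₘ²σ² + σₘ²μ² + μₘ²σ²`, and the Pearson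
correlation equals `(1 + (σₘ²/μₘ²)(1 + μ²/σ²))⁻¹ = μₘ²σ²/(σₘ²σ² + σₘ²μ² + μₘ²σ²)`. -/
theorem corm_weights_correlation {Ω : Type*} [MeasureSpace Ω]
    [IsProbabilityMeasure (ℙ : Measure Ω)]
    (M₁ M₂ J : Ω → ℝ)
    (hindep : iIndepFun ![M₁, M₂, J] ℙ)
    (hid : IdentDistrib M₁ M₂ ℙ ℙ)
    (hM₁ : MemLp M₁ 2 ℙ) (hM₂ : MemLp M₂ 2 ℙ) (hJ : MemLp J 2 ℙ)
    (μm σm2 μ σ2 : ℝ)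
    (hμm : μm = ∫ ω, M₁ ω ∂ℙ) (hμm0 : μm ≠ 0)
    (hσm2 : σm2 = variance M₁ ℙ) (hσm2pos : 0 < σm2)
    (hμ : μ = ∫ ω, J ω ∂ℙ)
    (hσ2 : σ2 = variance J ℙ) (hσ2pos : 0 < σ2) :
    (∫ ω, (M₁ ω * J ω) * (M₂ ω * J ω) ∂ℙ) -
        (∫ ω, M₁ ω * J ω ∂ℙ) * (∫ ω, M₂ ω * J ω ∂ℙ) = μm ^ 2 * σ2 ∧
      variance (fun ω => M₁ ω * J ω) ℙ = σm2 * σ2 + σm2 * μ ^ 2 + μm ^ 2 * σ2 ∧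
      variance (fun ω => M₂ ω * J ω) ℙ = σm2 * σ2 + σm2 * μ ^ 2 + μm ^ 2 * σ2 ∧
      ((∫ ω, (M₁ ω * J ω) * (M₂ ω * J ω) ∂ℙ) -
          (∫ ω, M₁ ω * J ω ∂ℙ) * (∫ ω, M₂ ω * J ω ∂ℙ)) /
          (Real.sqrt (variance (fun ω => M₁ ω * J ω) ℙ) *
            Real.sqrt (variance (fun ω => M₂ ω * J ω) ℙ)) =
        (1 + σm2 / μm ^ 2 * (1 + μ ^ 2 / σ2))⁻¹ ∧
      (1 + σm2 / μm ^ 2 * (1 + μ ^ 2 / σ2))⁻¹ =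
        μm ^ 2 * σ2 / (σm2 * σ2 + σm2 * μ ^ 2 + μm ^ 2 * σ2) :=
  corm_weights_correlation_general M₁ M₂ J hindep hid hM₁ hJ μm σm2 μ σ2 hμm hμm0 hσm2 hμ hσ2 hσ2pos
end

section
/- For all real numbers s > 0, φ > 0 and σ ∈ (0,1), the following integral identity holds: ∫₀^∞ z⁻¹ · (Γ(φ))⁻¹ (s/z)^{φ−1} e^{−s/z} · (σ Γ(φ) / (Γ(σ+φ) Γ(1−σ))) · z^{−1−σ} dz = σ s^{−1−σ} / Γ(1−σ). (This shows that a Compound Random Measure with Gamma(φ,1)-distributed scores and σ-stable directing Lévy measure ν*(dz) = (σΓ(φ)/(Γ(σ+φ)Γ(1−σ))) z^{−1−σ} dz has σ-stable marginal Lévy intensities.) -/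
open MeasureTheory Real

/-!
The substitution `x = 1 / z` turns `∫₀^∞ z^(-a-1) e^(-s/z) dz` into the Gamma-type integral
`∫₀^∞ x^(a-1) e^(-s x) dx = s^(-a) Γ(a)`. With `a = σ + φ`, the factor `Γ(σ + φ)` produced by
the integral cancels the normalising constant of the directing Lévy measure, and the powers of
`s` combine to `s^(-1-σ)`.
-/

theorem integral_rpow_neg_sub_one_mul_exp_neg_div_Ioi {a s : ℝ} (ha : 0 < a) (hs : 0 < s) :
    ∫ z in Set.Ioi (0 : ℝ), z ^ (-a - 1) * exp (-(s / z)) = (1 / s) ^ a * Gamma a := by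
  rw [← integral_rpow_mul_exp_neg_mul_Ioi ha hs,
    ← integral_comp_rpow_Ioi (fun x => x ^ (a - 1) * exp (-(s * x))) (p := -1) (by norm_num)]
  refine setIntegral_congr_fun measurableSet_Ioi fun z (hz : 0 < z) => ?_
  have hpow : z ^ (-a - 1) = z ^ ((-1 : ℝ) - 1) * (z ^ (-1 : ℝ)) ^ (a - 1) := by
    rw [← rpow_mul hz.le, ← rpow_add hz]
    ring_nf
  rw [hpow, rpow_neg_one, smul_eq_mul, abs_neg, abs_one, one_mul, div_eq_mul_inv, mul_assoc]

/-- A Compound Random Measure with Gamma(φ,1)-distributed scores and σ-stable directing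
Lévy measure has σ-stable marginal Lévy intensities. -/
theorem corm_gamma_stable_marginal_intensity (s φ σ : ℝ) (hs : 0 < s) (hφ : 0 < φ)
    (hσ : σ ∈ Set.Ioo (0 : ℝ) 1) :
    ∫ z in Set.Ioi (0 : ℝ),
        z⁻¹ * ((Real.Gamma φ)⁻¹ * (s / z) ^ (φ - 1) * Real.exp (-(s / z))) *
          (σ * Real.Gamma φ / (Real.Gamma (σ + φ) * Real.Gamma (1 - σ)) * z ^ (-1 - σ)) =
      σ * s ^ (-1 - σ) / Real.Gamma (1 - σ) := by
  have hσφ : 0 < σ + φ := by linarith [hσ.1]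
  have h_integrand : ∀ z ∈ Set.Ioi (0 : ℝ),
      z⁻¹ * ((Gamma φ)⁻¹ * (s / z) ^ (φ - 1) * exp (-(s / z))) *
          (σ * Gamma φ / (Gamma (σ + φ) * Gamma (1 - σ)) * z ^ (-1 - σ)) =
        σ * s ^ (φ - 1) / (Gamma (σ + φ) * Gamma (1 - σ)) *
          (z ^ (-(σ + φ) - 1) * exp (-(s / z))) := by
    intro z (hz : 0 < z)
    have hpow : z ^ (-(σ + φ) - 1) = z⁻¹ * (z ^ (φ - 1))⁻¹ * z ^ (-1 - σ) := by
      rw [← rpow_neg_one, ← rpow_neg hz.le, ← rpow_add hz, ← rpow_add hz]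
      ring_nf
    rw [hpow, div_rpow hs.le hz.le]
    field_simp [(Gamma_pos_of_pos hφ).ne']
  rw [setIntegral_congr_fun measurableSet_Ioi h_integrand, integral_const_mul,
    integral_rpow_neg_sub_one_mul_exp_neg_div_Ioi hσφ hs]
  have hs_pow : s ^ (φ - 1) * (1 / s) ^ (σ + φ) = s ^ (-1 - σ) := by
    rw [one_div, inv_rpow hs.le, ← rpow_neg hs.le, ← rpow_add hs]
    ring_nf
  field_simp [(Gamma_pos_of_pos hσφ).ne']
  rw [← hs_pow]
  ring
end

section
/- For every σ ∈ (0,1), the function T_σ : (0,∞) → ℝ defined by T_σ(φ) = −ψ(φ) + (1/σ)·(log Γ(φ+σ) − log Γ(φ)) is strictly decreasing on (0,∞). -/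
/-!
The recurrences `log Γ(x + 1) = log x + log Γ(x)` and `ψ(x + 1) = ψ(x) + 1/x` give
`T_σ(φ) - T_σ(φ + 1) = g_σ(φ)` with `g_σ(t) = 1/t - (1/σ)(log (t + σ) - log t)`, which is
strictly decreasing since `g_σ'(t) = -σ / (t²(t + σ))`. Convexity of `log Γ` places the chord
slope `(log Γ(φ + σ) - log Γ(φ)) / σ` between `ψ(φ)` and `ψ(φ + σ) ≤ ψ(φ + 1) = ψ(φ) + 1/φ`,
so `0 ≤ T_σ(φ) ≤ 1/φ` and `T_σ(φ + n) → 0`. Telescoping, for `x < y` we get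
`T_σ(x) - T_σ(y) = ∑ₖ (g_σ(x + k) - g_σ(y + k)) ≥ g_σ(x) - g_σ(y) > 0`.
-/

open Real Filter Topology Set

namespace ExpectedKL

noncomputable def digamma (x : ℝ) : ℝ := deriv (fun t => log (Gamma t)) x

noncomputable def expectedKL (σ φ : ℝ) : ℝ :=
  -digamma φ + (1 / σ) * (log (Gamma (φ + σ)) - log (Gamma φ))

noncomputable def klIncrement (σ t : ℝ) : ℝ := 1 / t - (1 / σ) * (log (t + σ) - log t)

section Digamma

variable {x y : ℝ}

theorem log_Gamma_add_one (hx : 0 < x) : log (Gamma (x + 1)) = log x + log (Gamma x) := by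
  rw [Gamma_add_one hx.ne', log_mul hx.ne' (Gamma_pos_of_pos hx).ne']

theorem hasDerivAt_log_Gamma (hx : 0 < x) :
    HasDerivAt (fun t => log (Gamma t)) (digamma x) x := by
  have hGamma : DifferentiableAt ℝ Gamma x :=
    (differentiableOn_Gamma_Ioi x hx).differentiableAt (Ioi_mem_nhds hx)
  exact (hGamma.log (Gamma_pos_of_pos hx).ne').hasDerivAt

theorem digamma_add_one (hx : 0 < x) : digamma (x + 1) = digamma x + 1 / x := by
  have hshift : digamma (x + 1) = deriv (fun t => log (Gamma (t + 1))) x :=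
    (deriv_comp_add_const _ 1 x).symm
  have hrec : (fun t => log (Gamma (t + 1))) =ᶠ[𝓝 x] fun t => log t + log (Gamma t) :=
    (eventually_gt_nhds hx).mono fun t ht => log_Gamma_add_one ht
  rw [hshift, hrec.deriv_eq, add_comm, one_div]
  exact ((hasDerivAt_log hx.ne').add (hasDerivAt_log_Gamma hx)).deriv

theorem digamma_le_slope (hx : 0 < x) (hxy : x < y) :
    digamma x ≤ (log (Gamma y) - log (Gamma x)) / (y - x) := by
  simpa only [slope_def_field, Function.comp_apply] using
    convexOn_log_Gamma.le_slope_of_hasDerivAt hx (hx.trans hxy) hxy (hasDerivAt_log_Gamma hx)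

theorem slope_le_digamma (hx : 0 < x) (hxy : x < y) :
    (log (Gamma y) - log (Gamma x)) / (y - x) ≤ digamma y := by
  simpa only [slope_def_field, Function.comp_apply] using
    convexOn_log_Gamma.slope_le_of_hasDerivAt hx (hx.trans hxy) hxy
      (hasDerivAt_log_Gamma (hx.trans hxy))

theorem digamma_le_digamma (hx : 0 < x) (hxy : x ≤ y) : digamma x ≤ digamma y := by
  rcases hxy.eq_or_lt with rfl | hlt
  · rfl
  · exact (digamma_le_slope hx hlt).trans (slope_le_digamma hx hlt)

end Digamma

section Divergence

variable {σ φ : ℝ}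

theorem digamma_le_chord (hσ : 0 < σ) (hφ : 0 < φ) :
    digamma φ ≤ (1 / σ) * (log (Gamma (φ + σ)) - log (Gamma φ)) := by
  simpa [one_div, inv_mul_eq_div] using digamma_le_slope hφ (lt_add_of_pos_right φ hσ)

theorem chord_le_digamma (hσ : 0 < σ) (hφ : 0 < φ) :
    (1 / σ) * (log (Gamma (φ + σ)) - log (Gamma φ)) ≤ digamma (φ + σ) := by
  simpa [one_div, inv_mul_eq_div] using slope_le_digamma hφ (lt_add_of_pos_right φ hσ)

theorem expectedKL_nonneg (hσ : 0 < σ) (hφ : 0 < φ) : 0 ≤ expectedKL σ φ := by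
  have hchord := digamma_le_chord hσ hφ
  rw [expectedKL]
  linarith

theorem expectedKL_le (hσ : 0 < σ) (hσ1 : σ ≤ 1) (hφ : 0 < φ) :
    expectedKL σ φ ≤ 1 / φ := by
  have hmono := digamma_le_digamma (by linarith : 0 < φ + σ) (by linarith : φ + σ ≤ φ + 1)
  have hchord := chord_le_digamma hσ hφ
  have hstep := digamma_add_one hφ
  rw [expectedKL]
  linarith

theorem tendsto_expectedKL_atTop (hσ : 0 < σ) (hσ1 : σ ≤ 1) :
    Tendsto (expectedKL σ) atTop (𝓝 0) := by
  refine tendsto_of_tendsto_of_tendsto_of_le_of_le' tendsto_const_nhds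
    (tendsto_inv_atTop_zero.congr fun t => (one_div t).symm) ?_ ?_
  · filter_upwards [eventually_gt_atTop 0] with t ht using expectedKL_nonneg hσ ht
  · filter_upwards [eventually_gt_atTop 0] with t ht using expectedKL_le hσ hσ1 ht

theorem expectedKL_eq_klIncrement_add (hσ : 0 < σ) (hφ : 0 < φ) :
    expectedKL σ φ = klIncrement σ φ + expectedKL σ (φ + 1) := by
  have hφσ : 0 < φ + σ := by linarith
  simp only [expectedKL, klIncrement, add_right_comm φ 1 σ, log_Gamma_add_one hφσ,
    log_Gamma_add_one hφ, digamma_add_one hφ]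
  ring

theorem expectedKL_eq_sum_add (hσ : 0 < σ) (hφ : 0 < φ) (n : ℕ) :
    expectedKL σ φ =
      ∑ k ∈ Finset.range n, klIncrement σ (φ + k) + expectedKL σ (φ + n) := by
  induction n with
  | zero => simp
  | succ n ih =>
    rw [ih, Finset.sum_range_succ, expectedKL_eq_klIncrement_add hσ (by positivity : 0 < φ + n)]
    push_cast
    ring_nf

theorem hasDerivAt_klIncrement (hσ : 0 < σ) {t : ℝ} (ht : 0 < t) :
    HasDerivAt (klIncrement σ) (-σ / (t ^ 2 * (t + σ))) t := by
  have hlog : HasDerivAt (fun u => log (u + σ) - log u) ((t + σ)⁻¹ - t⁻¹) t :=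
    ((((hasDerivAt_id t).add_const σ).log (by simp; linarith)).sub
      (hasDerivAt_log ht.ne')).congr_deriv (by simp)
  have hfun : klIncrement σ = fun u => u⁻¹ - 1 / σ * (log (u + σ) - log u) := by
    ext u; rw [klIncrement, one_div u]
  rw [hfun]
  refine ((hasDerivAt_inv ht.ne').sub (hlog.const_mul (1 / σ))).congr_deriv ?_
  field_simp
  ring

theorem klIncrement_strictAntiOn (hσ : 0 < σ) : StrictAntiOn (klIncrement σ) (Ioi 0) := by
  refine strictAntiOn_of_hasDerivWithinAt_neg (convex_Ioi 0)
    (fun t ht => (hasDerivAt_klIncrement hσ ht).continuousAt.continuousWithinAt)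
    (fun t ht => (hasDerivAt_klIncrement hσ (interior_subset ht)).hasDerivWithinAt) ?_
  intro t ht
  have ht : 0 < t := interior_subset ht
  exact div_neg_of_neg_of_pos (neg_neg_of_pos hσ) (by positivity)

theorem klIncrement_sub_le_expectedKL_sub (hσ : 0 < σ) (hσ1 : σ ≤ 1) {x y : ℝ} (hx : 0 < x)
    (hxy : x < y) : klIncrement σ x - klIncrement σ y ≤ expectedKL σ x - expectedKL σ y := by
  have hy : 0 < y := hx.trans hxy
  have htail : Tendsto (fun n : ℕ => expectedKL σ x - expectedKL σ y -
      (expectedKL σ (x + n) - expectedKL σ (y + n))) atTop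
      (𝓝 (expectedKL σ x - expectedKL σ y)) := by
    have hshift (z : ℝ) : Tendsto (fun n : ℕ => expectedKL σ (z + n)) atTop (𝓝 0) :=
      (tendsto_expectedKL_atTop hσ hσ1).comp
        (tendsto_atTop_add_const_left _ z tendsto_natCast_atTop_atTop)
    simpa using tendsto_const_nhds.sub ((hshift x).sub (hshift y))
  refine ge_of_tendsto htail (eventually_atTop.2 ⟨1, fun n hn => ?_⟩)
  have hsum := Finset.single_le_sum
    (f := fun k : ℕ => klIncrement σ (x + k) - klIncrement σ (y + k))
    (fun k _ => sub_nonneg.2 <| (klIncrement_strictAntiOn hσ (by positivity : 0 < x + k)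
      (by positivity : 0 < y + k) (by linarith)).le) (Finset.mem_range.2 hn)
  rw [Finset.sum_sub_distrib] at hsum
  simp only [CharP.cast_eq_zero, add_zero] at hsum
  rw [expectedKL_eq_sum_add hσ hx n, expectedKL_eq_sum_add hσ hy n]
  linarith

theorem expectedKL_strictAntiOn (hσ : 0 < σ) (hσ1 : σ ≤ 1) :
    StrictAntiOn (expectedKL σ) (Ioi 0) := fun x (hx : 0 < x) y (hy : 0 < y) hxy => by
  linarith [klIncrement_strictAntiOn hσ hx hy hxy,
    klIncrement_sub_le_expectedKL_sub hσ hσ1 hx hxy]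

end Divergence

end ExpectedKL

/-- For σ ∈ (0,1), the expected Kullback–Leibler divergence
`T_σ(φ) = -ψ(φ) + (1/σ)(log Γ(φ+σ) - log Γ(φ))` is strictly decreasing on (0,∞),
where `ψ` is the digamma function. -/
theorem expected_KL_strictAnti (σ : ℝ) (hσ : σ ∈ Set.Ioo (0 : ℝ) 1) :
    StrictAntiOn
      (fun φ : ℝ =>
        -(deriv (fun t : ℝ => Real.log (Real.Gamma t)) φ) +
          (1 / σ) * (Real.log (Real.Gamma (φ + σ)) - Real.log (Real.Gamma φ)))
      (Set.Ioi 0) :=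
  ExpectedKL.expectedKL_strictAntiOn hσ.1 hσ.2.le
end

section
/- For every σ ∈ (0,1), the function T_σ(φ) = −ψ(φ) + (1/σ)·(log Γ(φ+σ) − log Γ(φ)) tends to +∞ as φ → 0 from the right. -/
open Real Filter Set Topology

/- The recurrences `log Γ(x + 1) = log Γ x + log x` and `ψ(x + 1) = ψ x + 1 / x` give
`T_σ(φ) = T_σ(φ + 1) + 1 / φ + (1 / σ) log (φ / (φ + σ))`, and `T_σ ≥ 0` on `(0, ∞)` because,
`log Γ` being convex, its slope over `[x, x + σ]` is at least its derivative `ψ x`. Hence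
`T_σ(φ) ≥ 1 / φ + (1 / σ) log φ - (1 / σ) log (φ + σ)`, and `1 / φ` beats `(1 / σ) log φ`. -/

namespace Real

theorem differentiableAt_log_Gamma {x : ℝ} (hx : 0 < x) :
    DifferentiableAt ℝ (fun t => log (Gamma t)) x :=
  (differentiableAt_Gamma fun m => by linarith [(m.cast_nonneg : (0 : ℝ) ≤ m)]).log
    (Gamma_pos_of_pos hx).ne'

theorem log_Gamma_add_one {x : ℝ} (hx : 0 < x) :
    log (Gamma (x + 1)) = log (Gamma x) + log x := by
  rw [Gamma_add_one hx.ne', log_mul hx.ne' (Gamma_pos_of_pos hx).ne', add_comm]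

theorem deriv_log_Gamma_add_one {x : ℝ} (hx : 0 < x) :
    deriv (fun t => log (Gamma t)) (x + 1) = deriv (fun t => log (Gamma t)) x + x⁻¹ := by
  rw [← deriv_comp_add_const, ← deriv_log,
    ← deriv_add (differentiableAt_log_Gamma hx) (differentiableAt_log hx.ne')]
  exact EventuallyEq.deriv_eq (eventually_gt_nhds hx |>.mono fun t ht => log_Gamma_add_one ht)

theorem deriv_log_Gamma_le_slope {x h : ℝ} (hx : 0 < x) (hh : 0 < h) :
    deriv (fun t => log (Gamma t)) x ≤ (log (Gamma (x + h)) - log (Gamma x)) / h := by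
  have := convexOn_log_Gamma.deriv_le_slope (mem_Ioi.2 hx) (mem_Ioi.2 (by linarith : 0 < x + h))
    (by linarith) (differentiableAt_log_Gamma hx)
  rwa [slope_def_field, add_sub_cancel_left] at this

end Real

/-- `T_σ(φ)`. -/
noncomputable def expectedKL (σ φ : ℝ) : ℝ :=
  -(deriv (fun t : ℝ => log (Gamma t)) φ) + (1 / σ) * (log (Gamma (φ + σ)) - log (Gamma φ))

theorem expectedKL_nonneg {σ φ : ℝ} (hσ : 0 < σ) (hφ : 0 < φ) : 0 ≤ expectedKL σ φ := by
  have := deriv_log_Gamma_le_slope hφ hσ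
  rw [expectedKL, one_div_mul_eq_div]
  linarith

theorem expectedKL_eq_expectedKL_add_one {σ φ : ℝ} (hφ : 0 < φ) (hφσ : 0 < φ + σ) :
    expectedKL σ φ = expectedKL σ (φ + 1) + φ⁻¹ + 1 / σ * (log φ - log (φ + σ)) := by
  rw [expectedKL, expectedKL, deriv_log_Gamma_add_one hφ, add_right_comm φ 1 σ,
    log_Gamma_add_one hφσ, log_Gamma_add_one hφ]
  ring

theorem tendsto_inv_add_mul_log_nhdsGT_zero (c : ℝ) :
    Tendsto (fun x => x⁻¹ + c * log x) (𝓝[>] 0) atTop := by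
  have hmul_log : Tendsto (fun x => 1 + c * (x * log x)) (𝓝[>] 0) (𝓝 1) := by
    simpa using ((continuous_mul_log.tendsto 0).mono_left nhdsWithin_le_nhds).const_mul c
      |>.const_add 1
  refine (tendsto_inv_nhdsGT_zero.atTop_mul_pos one_pos hmul_log).congr' ?_
  filter_upwards [self_mem_nhdsWithin] with x hx
  field_simp [(mem_Ioi.1 hx).ne']

/-- For σ ∈ (0,1), the expected Kullback–Leibler divergence
`T_σ(φ) = -ψ(φ) + (1/σ)(log Γ(φ+σ) - log Γ(φ))` tends to +∞ as φ → 0⁺,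
where `ψ` is the digamma function. -/
theorem expected_KL_tendsto_atTop_zero (σ : ℝ) (hσ : σ ∈ Set.Ioo (0 : ℝ) 1) :
    Tendsto
      (fun φ : ℝ =>
        -(deriv (fun t : ℝ => Real.log (Real.Gamma t)) φ) +
          (1 / σ) * (Real.log (Real.Gamma (φ + σ)) - Real.log (Real.Gamma φ)))
      (nhdsWithin 0 (Set.Ioi 0)) atTop := by
  have hσ0 : 0 < σ := hσ.1
  have hshift : Tendsto (fun φ => φ + σ) (𝓝[>] 0) (𝓝 σ) :=
    ((continuous_add_const σ).tendsto' 0 σ (zero_add σ)).mono_left nhdsWithin_le_nhds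
  have hlog_add : Tendsto (fun φ => -(1 / σ * log (φ + σ))) (𝓝[>] 0) (𝓝 (-(1 / σ * log σ))) :=
    ((hshift.log hσ0.ne').const_mul (1 / σ)).neg
  refine tendsto_atTop_mono' _ ?_
    ((tendsto_inv_add_mul_log_nhdsGT_zero (1 / σ)).atTop_add hlog_add)
  filter_upwards [self_mem_nhdsWithin] with φ (hφ : 0 < φ)
  have hT := expectedKL_eq_expectedKL_add_one hφ (add_pos hφ hσ0)
  have := expectedKL_nonneg hσ0 (by linarith : 0 < φ + 1)
  simp only [expectedKL] at hT this
  linarith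
end

section
/- For all real numbers s > 0 and φ > 0, the following integral identity holds: ∫₀¹ z⁻¹ · (Γ(φ))⁻¹ (s/z)^{φ−1} e^{−s/z} · z⁻¹ (1−z)^{φ−1} dz = s⁻¹ e^{−s}. (Hence a Compound Random Measure with Gamma(φ,1)-distributed scores and beta directing Lévy measure ν*(dz) = z⁻¹(1−z)^{φ−1} dz on (0,1) has gamma-process marginal Lévy intensities, so its normalized marginals are Dirichlet processes.) -/
open MeasureTheory Real Set

/-!
Substitute `t = s / z - s = s (1 - z) / z`, a decreasing bijection of `(0, 1)` onto `(0, ∞)`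
with `|dt/dz| = s / z ^ 2`. Since `(s / z) ^ (φ - 1) (1 - z) ^ (φ - 1) = t ^ (φ - 1)` and
`e ^ (-s / z) = e ^ (-t) e ^ (-s)`, the integrand becomes `(Γ(φ) s e ^ s)⁻¹ t ^ (φ - 1) e ^ (-t)`,
and Euler's integral for `Γ(φ)` finishes the computation.
-/

lemma hasDerivAt_div_sub_self (s : ℝ) {z : ℝ} (hz : z ≠ 0) :
    HasDerivAt (fun z => s / z - s) (-s / z ^ 2) z := by
  have h := ((hasDerivAt_inv hz).const_mul s).sub_const s
  simp only [← div_eq_mul_inv] at h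
  rwa [mul_neg, ← div_eq_mul_inv, ← neg_div] at h

lemma injective_div_sub_self {s : ℝ} (hs : s ≠ 0) : Function.Injective fun z : ℝ => s / z - s := by
  intro a b hab
  simpa only [sub_left_inj, div_eq_mul_inv, mul_right_inj' hs, inv_inj] using hab

lemma image_div_sub_self_Ioo {s : ℝ} (hs : 0 < s) : (fun z => s / z - s) '' Ioo 0 1 = Ioi 0 := by
  ext t
  constructor
  · rintro ⟨z, ⟨hz0, hz1⟩, rfl⟩
    have : s < s / z := by rw [lt_div_iff₀ hz0]; nlinarith
    exact sub_pos.mpr this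
  · intro (ht : 0 < t)
    have hts : 0 < t + s := by linarith
    refine ⟨s / (t + s), ⟨div_pos hs hts, (div_lt_one hts).mpr (by linarith)⟩, ?_⟩
    field_simp
    ring

theorem integral_Ioi_eq_integral_Ioo_div_sub_self {E : Type*} [NormedAddCommGroup E]
    [NormedSpace ℝ E] {s : ℝ} (hs : 0 < s) (g : ℝ → E) :
    ∫ t in Ioi 0, g t = ∫ z in Ioo 0 1, (s / z ^ 2) • g (s / z - s) := by
  rw [← image_div_sub_self_Ioo hs, integral_image_eq_integral_abs_deriv_smul measurableSet_Ioo
    (fun z hz => (hasDerivAt_div_sub_self s hz.1.ne').hasDerivWithinAt)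
    (injective_div_sub_self hs.ne').injOn g]
  refine setIntegral_congr_fun measurableSet_Ioo fun z hz => ?_
  rw [abs_div, abs_neg, abs_of_pos hs, abs_of_pos (pow_pos hz.1 2)]

lemma gamma_beta_integrand_eq {s φ z : ℝ} (hs : 0 < s) (hz : z ∈ Ioo 0 1) :
    z⁻¹ * ((Gamma φ)⁻¹ * (s / z) ^ (φ - 1) * exp (-(s / z))) * (z⁻¹ * (1 - z) ^ (φ - 1)) =
      (s / z ^ 2) * ((Gamma φ)⁻¹ * s⁻¹ * exp (-s) *
        (exp (-(s / z - s)) * (s / z - s) ^ (φ - 1))) := by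
  obtain ⟨hz0, hz1⟩ := hz
  have hmul : s / z - s = s / z * (1 - z) := by field_simp
  have hrpow : (s / z - s) ^ (φ - 1) = (s / z) ^ (φ - 1) * (1 - z) ^ (φ - 1) := by
    rw [hmul, mul_rpow (div_pos hs hz0).le (by linarith)]
  have hexp : exp (-s) * exp (-(s / z - s)) = exp (-(s / z)) := by
    rw [← exp_add]
    ring_nf
  rw [hrpow, ← hexp]
  field_simp

/-- A Compound Random Measure with Gamma(φ,1)-distributed scores and beta directing Lévy
measure `ν*(dz) = z⁻¹(1-z)^{φ-1} dz` on (0,1) has gamma-process marginal Lévy intensities. -/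
theorem corm_gamma_beta_marginal_intensity (s φ : ℝ) (hs : 0 < s) (hφ : 0 < φ) :
    ∫ z in Set.Ioo (0 : ℝ) 1,
        z⁻¹ * ((Real.Gamma φ)⁻¹ * (s / z) ^ (φ - 1) * Real.exp (-(s / z))) *
          (z⁻¹ * (1 - z) ^ (φ - 1)) =
      s⁻¹ * Real.exp (-s) := by
  calc _ = ∫ z in Ioo 0 1, (s / z ^ 2) • ((Gamma φ)⁻¹ * s⁻¹ * exp (-s) *
          (exp (-(s / z - s)) * (s / z - s) ^ (φ - 1))) :=
        setIntegral_congr_fun measurableSet_Ioo fun z hz => gamma_beta_integrand_eq hs hz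
    _ = ∫ t in Ioi 0, (Gamma φ)⁻¹ * s⁻¹ * exp (-s) * (exp (-t) * t ^ (φ - 1)) :=
        (integral_Ioi_eq_integral_Ioo_div_sub_self hs
          fun t => (Gamma φ)⁻¹ * s⁻¹ * exp (-s) * (exp (-t) * t ^ (φ - 1))).symm
    _ = s⁻¹ * exp (-s) := by
        rw [integral_const_mul, ← Gamma_eq_integral hφ]
        field_simp [(Gamma_pos_of_pos hφ).ne']
end
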